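/- arXiv:2001.00882 — 3 statements merged into one kernel-verified Lean document; each statement's English description precedes it below -/
import Mathlib

section
/- Assume Conditions (C). Then for any sequence l = l_n > 0 with l = o(n) and any i ∈ {1,2,3}, the partial sum of the l largest weights satisfies Σ_{k=1}^{l} w_k^i = o(n) as n → ∞. -/
/-!
Since `w ^ i ≤ w ^ 3 + 1` for `i ≤ 3` and `w ≥ 0`, it suffices to treat cubes. Truncate `x ↦ x ^ 3`
at a level `K`: the `l` largest weights contribute at most `l K ^ 3 = o(n)` to the truncated sum,
while the excess `∑ (w ^ 3 - min w K ^ 3)` over all `n` weights is, by the cube condition and weak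
convergence, `n (E[W ^ 3] - E[min W K ^ 3]) + o(n)`, which is small for `K` large by dominated
convergence.
-/

open MeasureTheory Filter Asymptotics
open scoped Classical ENNReal Topology

noncomputable section

/-- `ℓ_n`: the total weight. -/
def ell (w : ∀ n : ℕ, Fin n → ℝ) (n : ℕ) : ℝ := ∑ i, w n i

/-- Conditions (C) on the triangular array of weights, relative to the law `μ` of the
limiting random variable `W`. -/
structure CondC (w : ∀ n : ℕ, Fin n → ℝ) (μ : Measure ℝ) : Prop where
  isProb : IsProbabilityMeasure μ
  pos : ∀ᵐ x ∂μ, 0 < x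
  w_pos : ∀ n, ∀ i : Fin n, 0 < w n i
  w_anti : ∀ n, ∀ i j : Fin n, i ≤ j → w n j ≤ w n i
  int3 : Integrable (fun x => x ^ 3) μ
  moment_eq : ∫ x, x ^ 2 ∂μ = ∫ x, x ∂μ
  weak : ∀ g : BoundedContinuousFunction ℝ ℝ,
    Tendsto (fun n : ℕ => (∑ i : Fin n, g (w n i)) / (n : ℝ)) atTop (𝓝 (∫ x, g x ∂μ))
  ell_asymp : (fun n : ℕ => ell w n - (∫ x, x ∂μ) * (n : ℝ)) =o[atTop]
      fun n : ℕ => (n : ℝ) ^ ((2 : ℝ) / 3)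
  sq_asymp : (fun n : ℕ => (∑ i : Fin n, (w n i) ^ 2) - (∫ x, x ^ 2 ∂μ) * (n : ℝ)) =o[atTop]
      fun n : ℕ => (n : ℝ) ^ ((2 : ℝ) / 3)
  cube_asymp : (fun n : ℕ => (∑ i : Fin n, (w n i) ^ 3) - (∫ x, x ^ 3 ∂μ) * (n : ℝ)) =o[atTop]
      fun _ : ℕ => (1 : ℝ)
  max_asymp : (fun n : ℕ => ⨆ i : Fin n, w n i) =o[atTop] fun n : ℕ => (n : ℝ) ^ ((1 : ℝ) / 3)

/-- The constant `C = E[W³]/E[W]`. -/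
def Cconst (μ : Measure ℝ) : ℝ := (∫ x, x ^ 3 ∂μ) / (∫ x, x ∂μ)

/-- The critical percolation parameter `p_f = (ℓ_n^{1/3} + f_n)/ℓ_n^{4/3}`. -/
def pf (w : ∀ n : ℕ, Fin n → ℝ) (f : ℕ → ℝ) (n : ℕ) : ℝ :=
  (ell w n ^ ((1 : ℝ) / 3) + f n) / ell w n ^ ((4 : ℝ) / 3)

/-- A Bernoulli-type measure on `Bool` with parameter `p`. -/
def bern (p : ℝ) : Measure Bool :=
  ENNReal.ofReal (1 - p) • Measure.dirac false + ENNReal.ofReal p • Measure.dirac true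

/-- The law of the independent edge indicators of the rank-1 inhomogeneous random graph
`G(W,p)`: the indicator attached to the (ordered) pair `(i,j)` is Bernoulli with success
probability `1 - exp (- w i * w j * p)`, all independent. -/
def graphMeasure (n : ℕ) (wn : Fin n → ℝ) (p : ℝ) : Measure (Fin n → Fin n → Bool) :=
  Measure.pi fun i => Measure.pi fun j => bern (1 - Real.exp (-(wn i * wn j * p)))

/-- The simple graph built from a sample of edge indicators: `i ~ j` iff `i ≠ j` and the
indicator of the pair `(min i j, max i j)` is `true`. -/
def graphOf {n : ℕ} (ω : Fin n → Fin n → Bool) : SimpleGraph (Fin n) :=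
  SimpleGraph.fromRel fun i j => ω (min i j) (max i j) = true

/-- The size (number of vertices) of a connected component. -/
def csize {n : ℕ} (G : SimpleGraph (Fin n)) (c : G.ConnectedComponent) : ℕ :=
  Nat.card {v : Fin n // G.connectedComponentMk v = c}

/-- The weight of a connected component: sum of the weights of its vertices. -/
def cweight {n : ℕ} (wn : Fin n → ℝ) (G : SimpleGraph (Fin n)) (c : G.ConnectedComponent) : ℝ :=
  ∑ v : Fin n, if G.connectedComponentMk v = c then wn v else 0

/-- The number of edges of a connected component. -/
def cedges {n : ℕ} (G : SimpleGraph (Fin n)) (c : G.ConnectedComponent) : ℕ :=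
  Nat.card {e : Sym2 (Fin n) // e ∈ G.edgeSet ∧ ∀ v ∈ e, G.connectedComponentMk v = c}

/-- The surplus (excess) of a connected component: edges − vertices + 1. -/
def csurplus {n : ℕ} (G : SimpleGraph (Fin n)) (c : G.ConnectedComponent) : ℤ :=
  (cedges G c : ℤ) - (csize G c : ℤ) + 1

/-- `c` is a largest connected component. -/
def isLargest {n : ℕ} (G : SimpleGraph (Fin n)) (c : G.ConnectedComponent) : Prop :=
  ∀ c', csize G c' ≤ csize G c

/-- The finset of connected components of a graph on `Fin n`. -/
def comps {n : ℕ} (G : SimpleGraph (Fin n)) : Finset G.ConnectedComponent :=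
  Finset.univ.image G.connectedComponentMk

/-- The law of the size-biased random order without replacement `(v(1),…,v(n))`, seen as a
measure on functions `Fin n → Fin n` (supported on permutations `σ`, with
`P(v = σ) = ∏_i w (σ i) / (ℓ_n − ∑_{k<i} w (σ k))`). -/
def sbMeasure (n : ℕ) (wn : Fin n → ℝ) : Measure (Fin n → Fin n) :=
  Measure.sum fun σ : Equiv.Perm (Fin n) =>
    ENNReal.ofReal (∏ i : Fin n,
        wn (σ i) / ((∑ k, wn k) - ∑ k ∈ Finset.univ.filter fun k => k < i, wn (σ k))) •
      Measure.dirac ⇑σ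

/-- The joint law of (edge indicators of `G(W,p)`, size-biased order), the two being
independent. -/
def expMeasure' (n : ℕ) (wn : Fin n → ℝ) (p : ℝ) :
    Measure ((Fin n → Fin n → Bool) × (Fin n → Fin n)) :=
  Measure.sum fun σ : Equiv.Perm (Fin n) =>
    ENNReal.ofReal (∏ i : Fin n,
        wn (σ i) / ((∑ k, wn k) - ∑ k ∈ Finset.univ.filter fun k => k < i, wn (σ k))) •
      (graphMeasure n wn p).map fun g => (g, ⇑σ)

/-- `sbW wn vord k` is `w_{v(k)}` (1-based), with the conventions `w_{v(0)} = 0` and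
`w_{v(k)} = 0` for `k > n`. -/
def sbW {n : ℕ} (wn : Fin n → ℝ) (vord : Fin n → Fin n) (k : ℕ) : ℝ :=
  if h : k - 1 < n then (if k = 0 then 0 else wn (vord ⟨k - 1, h⟩)) else 0

/-- The (0-based) first position, in the order `vord`, of a vertex of the component `c`;
this governs the order in which components are discovered by the breadth-first walk. -/
def firstIdx {n : ℕ} (G : SimpleGraph (Fin n)) (vord : Fin n → Fin n)
    (c : G.ConnectedComponent) : ℕ :=
  sInf {i : ℕ | ∃ h : i < n, G.connectedComponentMk (vord ⟨i, h⟩) = c}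

/-- The number of vertices explored strictly before the exploration of the component `c`
starts: components are explored in the order of their first appearance in `vord`, and the
exploration of `c` occupies the steps `startT c + 1, …, startT c + csize c`. -/
def startT {n : ℕ} (G : SimpleGraph (Fin n)) (vord : Fin n → Fin n)
    (c : G.ConnectedComponent) : ℕ :=
  ∑ v : Fin n, if firstIdx G vord (G.connectedComponentMk v) < firstIdx G vord c then 1 else 0

/-- The state (explored vertices, queue of discovered-but-unexplored vertices) of the
breadth-first walk after `i` steps; roots are chosen as the first undiscovered vertex in the
order `vord`, and children are queued in the order `vord`. -/
def bfwQueue {n : ℕ} (G : SimpleGraph (Fin n)) (vord : Fin n → Fin n) :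
    ℕ → Finset (Fin n) × List (Fin n)
  | 0 => (∅, [])
  | i + 1 =>
    let s := bfwQueue G vord i
    let q : List (Fin n) :=
      if s.2.isEmpty then ((List.ofFn vord).filter fun v => decide (v ∉ s.1)).take 1 else s.2
    match q with
    | [] => (s.1, [])
    | v :: rest =>
      (insert v s.1,
        rest ++ (List.ofFn vord).filter fun u => decide (G.Adj v u ∧ u ∉ s.1 ∧ u ∉ q))

/-- The reflected exploration process `L` of the breadth-first walk:
`L_0 = 1`, `L_{i+1} = max (L_i + c(i+1) - 1) 1`. -/
def Lproc {n : ℕ} (G : SimpleGraph (Fin n)) (vord : Fin n → Fin n) (i : ℕ) : ℕ :=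
  max (bfwQueue G vord i).2.length 1

/-- `discNbrs G vord i` is the number of neighbours of `v(i+1)` (0-based: `vord i`) outside
`{v(1),…,v(i+1)}`, i.e. the increment `X⁰_{i+1} + 1` of the process `L⁰`. -/
def discNbrs {n : ℕ} (G : SimpleGraph (Fin n)) (vord : Fin n → Fin n) (i : ℕ) : ℕ :=
  Nat.card {j : Fin n // (∃ h : i < n, G.Adj (vord ⟨i, h⟩) j) ∧
    ∀ k : ℕ, ∀ hk : k < n, k ≤ i → vord ⟨k, hk⟩ ≠ j}

/-- The process `L⁰`: `L⁰_0 = 1`, `L⁰_{i+1} = L⁰_i + X⁰_{i+1}` where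
`X⁰_{i+1} = ∑_{j ∉ {v(1),…,v(i+1)}} Y(v(i+1), j) − 1`. -/
def L0 {n : ℕ} (G : SimpleGraph (Fin n)) (vord : Fin n → Fin n) (m : ℕ) : ℤ :=
  1 - (m : ℤ) + ∑ i ∈ Finset.range m, (discNbrs G vord i : ℤ)

/-- The deterministic-drift process `L̃^h`, defined by
`L̃^h_m + m − 1 = ∑_{i=1}^m ∑_{k > i+h} (1 − exp (−w_{v(i)} w_{v(k)} p))`,
the inner sum being over positions `k ≤ n` in the size-biased order. -/
def Ltilde {n : ℕ} (wn : Fin n → ℝ) (p : ℝ) (vord : Fin n → Fin n) (h m : ℕ) : ℝ :=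
  1 - (m : ℝ) + ∑ i ∈ Finset.range m,
    if hi : i < n then
      ∑ k : Fin n, if i + h < (k : ℕ) then
        1 - Real.exp (-(wn (vord ⟨i, hi⟩) * wn (vord k) * p)) else 0
    else 0

/-- The law of the independent exponential clocks `(T_k)_{k ≤ n}`, `T_k` of rate `w_k / ℓ_n`. -/
def clocksMeasure (n : ℕ) (wn : Fin n → ℝ) : Measure (Fin n → ℝ) :=
  Measure.pi fun k => ProbabilityTheory.expMeasure (wn k / ∑ i, wn i)

/-- `N(x)`: the number of clocks that have rung by time `x`. -/
def Nclock {n : ℕ} (x : ℝ) (ω : Fin n → ℝ) : ℕ :=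
  ∑ k : Fin n, if ω k ≤ x then 1 else 0

/-- `X(x)`: the total weight of the clocks that have rung by time `x`. -/
def Xclock {n : ℕ} (wn : Fin n → ℝ) (x : ℝ) (ω : Fin n → ℝ) : ℝ :=
  ∑ k : Fin n, if ω k ≤ x then wn k else 0

/-- Conditions (C2) on a pair of sequences `(a, b)`, relative to the constant `Ā`. -/
structure Cond2 (w : ∀ n : ℕ, Fin n → ℝ) (Abar : ℝ) (a b : ℕ → ℝ) : Prop where
  exp_lt : ∀ᶠ n : ℕ in atTop,
    Real.exp (-(b n) ^ 2 / (Abar * (b n * (n : ℝ) ^ ((1 : ℝ) / 3) + a n))) < 1 / 4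
  a_top : Tendsto a atTop atTop
  b_top : Tendsto b atTop atTop
  a_lito : a =o[atTop] fun n : ℕ => (n : ℝ)
  b_bigO : b =O[atTop] a
  a_bigO : a =O[atTop] fun n => b n * ell w n ^ ((1 : ℝ) / 3)
  a_sq_bigO : (fun n => a n ^ 2) =O[atTop] fun n => b n * ell w n

/-- Conditions (C3) on a quadruple of sequences `(a, b, c, d)`. -/
structure Cond3 (w : ∀ n : ℕ, Fin n → ℝ) (Abar : ℝ) (a b c d : ℕ → ℝ) : Prop where
  sum_lito : (fun n => a n + c n) =o[atTop] fun n : ℕ => (n : ℝ)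
  diff_top : Tendsto (fun n => a n - b n) atTop atTop
  d_bigO : d =O[atTop] fun n => a n - b n
  c2 : Cond2 w Abar (fun n => Real.sqrt ((a n - b n) * (a n + c n))) d

/-- The list of component sizes, sorted in decreasing order. -/
def sizesList {n : ℕ} (G : SimpleGraph (Fin n)) : List ℕ :=
  (((comps G).val.map fun c => csize G c).sort (· ≤ ·)).reverse

/-- `kthSize G k` is the size of the `(k+1)`-st largest connected component of `G`
(`0` if there is no such component). -/
def kthSize {n : ℕ} (G : SimpleGraph (Fin n)) (k : ℕ) : ℕ := (sizesList G).getD k 0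

end

open scoped BoundedContinuousFunction Finset

theorem isLittleO_sub_mul_of_tendsto_div {u : ℕ → ℝ} {a : ℝ}
    (hu : Tendsto (fun n => u n / n) atTop (𝓝 a)) :
    (fun n => u n - a * n) =o[atTop] fun n => (n : ℝ) := by
  have hn0 : ∀ᶠ n : ℕ in atTop, (n : ℝ) ≠ 0 := by
    filter_upwards [eventually_ne_atTop 0] with n hn
    exact Nat.cast_ne_zero.mpr hn
  rw [isLittleO_iff_tendsto' (hn0.mono fun n hn h => absurd h hn)]
  refine (tendsto_sub_nhds_zero_iff.mpr hu).congr' ?_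
  filter_upwards [hn0] with n hn
  field_simp

section UniformIntegrability

variable {α : Type*} [TopologicalSpace α] {f : α → ℝ}

def clampBCF (hf : Continuous f) (K : ℝ) : α →ᵇ ℝ :=
  BoundedContinuousFunction.ofNormedAddCommGroup (fun y => max (min (f y) K) (-K))
    ((hf.min continuous_const).max continuous_const) |K| fun y => by
      rw [Real.norm_eq_abs, abs_le]
      constructor <;> cases abs_cases K <;> grind

theorem clampBCF_apply (hf : Continuous f) (K : ℝ) (y : α) :
    clampBCF hf K y = max (min (f y) K) (-K) := rfl

variable [MeasurableSpace α] [OpensMeasurableSpace α] {μ : Measure α}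

theorem tendsto_integral_clampBCF (hf : Continuous f) (hfi : Integrable f μ) :
    Tendsto (fun K : ℕ => ∫ y, clampBCF hf K y ∂μ) atTop (𝓝 (∫ y, f y ∂μ)) := by
  refine tendsto_integral_of_dominated_convergence (fun y => ‖f y‖)
    (fun K => (clampBCF hf K).continuous.aestronglyMeasurable) hfi.norm
    (fun K => ae_of_all _ fun y => ?_) (ae_of_all _ fun y => ?_)
  · simp only [clampBCF_apply, Real.norm_eq_abs, abs_le]
    constructor <;> cases abs_cases (f y) <;> grind
  · refine tendsto_const_nhds.congr' ?_
    filter_upwards [eventually_ge_atTop ⌈|f y|⌉₊] with K hK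
    have hK : |f y| ≤ K := Nat.ceil_le.mp hK
    rw [clampBCF_apply, abs_le] at *
    grind

theorem exists_bcf_le_integral_lt (hf : Continuous f) (hfi : Integrable f μ) {ε : ℝ}
    (hε : 0 < ε) :
    ∃ g : α →ᵇ ℝ, (∀ y, 0 ≤ f y → g y ≤ f y) ∧ ∫ y, f y ∂μ - ∫ y, g y ∂μ < ε := by
  obtain ⟨K, hK⟩ := ((tendsto_integral_clampBCF hf hfi).eventually
    (Ioi_mem_nhds (sub_lt_self (∫ y, f y ∂μ) hε))).exists
  refine ⟨clampBCF hf K, fun y hy => ?_, by linarith⟩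
  rw [clampBCF_apply]
  exact max_le (min_le_left _ _) (by linarith)

theorem isLittleO_sum_of_card_isLittleO (hf : Continuous f) (hfi : Integrable f μ)
    {x : ∀ n : ℕ, Fin n → α} (hx : ∀ n i, 0 ≤ f (x n i))
    (hweak : ∀ g : α →ᵇ ℝ,
      Tendsto (fun n : ℕ => (∑ i, g (x n i)) / n) atTop (𝓝 (∫ y, g y ∂μ)))
    (hsum : (fun n : ℕ => ∑ i, f (x n i) - (∫ y, f y ∂μ) * n) =o[atTop] fun n => (n : ℝ))
    {s : ∀ n : ℕ, Finset (Fin n)} (hs : (fun n => (#(s n) : ℝ)) =o[atTop] fun n => (n : ℝ)) :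
    (fun n => ∑ i ∈ s n, f (x n i)) =o[atTop] fun n => (n : ℝ) := by
  refine isLittleO_iff.mpr fun c hc => ?_
  obtain ⟨g, hgf, hgint⟩ := exists_bcf_le_integral_lt hf hfi (by positivity : 0 < c / 4)
  have hg := isLittleO_sub_mul_of_tendsto_div (hweak g)
  filter_upwards [hsum.def (by positivity : 0 < c / 4), hg.def (by positivity : 0 < c / 4),
    (hs.const_mul_left ‖g‖).def (by positivity : 0 < c / 4)] with n hfn hgn hsn
  simp only [Real.norm_eq_abs, Nat.abs_cast, abs_mul, abs_norm] at hfn hgn hsn ⊢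
  rw [abs_of_nonneg (Finset.sum_nonneg fun i _ => hx n i)]
  have hsg : ∑ i ∈ s n, g (x n i) ≤ ‖g‖ * #(s n) := by
    rw [mul_comm, ← nsmul_eq_mul]
    exact Finset.sum_le_card_nsmul _ _ _ fun i _ => (le_abs_self _).trans (g.norm_coe_le_norm _)
  have hfg : ∑ i ∈ s n, (f (x n i) - g (x n i)) ≤ ∑ i, (f (x n i) - g (x n i)) :=
    Finset.sum_le_sum_of_subset_of_nonneg (Finset.subset_univ _)
      fun i _ _ => sub_nonneg.mpr (hgf _ (hx n i))
  rw [Finset.sum_sub_distrib, Finset.sum_sub_distrib] at hfg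
  have hgap := mul_le_mul_of_nonneg_right hgint.le n.cast_nonneg
  linarith [abs_le.mp hfn, abs_le.mp hgn]

end UniformIntegrability

theorem pow_le_pow_add_one {a : ℝ} (ha : 0 ≤ a) {i m : ℕ} (him : i ≤ m) : a ^ i ≤ a ^ m + 1 := by
  rcases le_total a 1 with h | h
  · linarith [pow_le_one₀ ha h (n := i), pow_nonneg ha m]
  · linarith [pow_le_pow_right₀ h him]

theorem partial_sum_of_largest_weights_little_o_general
    (w : ∀ n : ℕ, Fin n → ℝ) (μ : Measure ℝ) (hC : CondC w μ)
    (l : ℕ → ℕ)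
    (hl : (fun n => (l n : ℝ)) =o[atTop] fun n : ℕ => (n : ℝ)) :
    ∀ i : ℕ, i ∈ ({1, 2, 3} : Set ℕ) →
      (fun n => ∑ k ∈ Finset.univ.filter (fun k : Fin n => (k : ℕ) < l n), w n k ^ i)
        =o[atTop] fun n : ℕ => (n : ℝ) := by
  intro i hi
  have hi3 : i ≤ 3 := by rcases hi with rfl | rfl | rfl <;> norm_num
  have hcard : (fun n => (#{k : Fin n | (k : ℕ) < l n} : ℝ)) =o[atTop] fun n => (n : ℝ) :=
    (isBigO_of_le _ fun n => by
      simp only [Fin.card_filter_val_lt, Real.norm_natCast]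
      exact_mod_cast min_le_right n (l n)).trans_isLittleO hl
  have hone : (fun _ : ℕ => (1 : ℝ)) =o[atTop] fun n => (n : ℝ) :=
    (isLittleO_one_left_iff ℝ).mpr (by simpa using tendsto_natCast_atTop_atTop)
  have hcube := isLittleO_sum_of_card_isLittleO (continuous_pow 3) hC.int3
    (fun n k => pow_nonneg (hC.w_pos n k).le 3) hC.weak (hC.cube_asymp.trans hone) hcard
  refine (isBigO_of_le _ fun n => ?_).trans_isLittleO (hcube.add hcard)
  have hpos : ∀ k : Fin n, 0 ≤ w n k := fun k => (hC.w_pos n k).le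
  rw [Real.norm_of_nonneg (Finset.sum_nonneg fun k _ => pow_nonneg (hpos k) i),
    Real.norm_of_nonneg (add_nonneg (Finset.sum_nonneg fun k _ => pow_nonneg (hpos k) 3)
      (Nat.cast_nonneg _)), Finset.card_eq_sum_ones, Nat.cast_sum, Nat.cast_one,
    ← Finset.sum_add_distrib]
  exact Finset.sum_le_sum fun k _ => pow_le_pow_add_one (hpos k) hi3

/-- Lemma 1 of the paper: for `l = o(n)` the partial sums of the `l`
largest weights (and their squares and cubes) are `o(n)`. -/
theorem partial_sum_of_largest_weights_little_o
    (w : ∀ n : ℕ, Fin n → ℝ) (μ : Measure ℝ) (hC : CondC w μ)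
    (l : ℕ → ℕ) (hl0 : ∀ n, 0 < l n)
    (hl : (fun n => (l n : ℝ)) =o[atTop] fun n : ℕ => (n : ℝ)) :
    ∀ i : ℕ, i ∈ ({1, 2, 3} : Set ℕ) →
      (fun n => ∑ k ∈ Finset.univ.filter (fun k : Fin n => (k : ℕ) < l n), w n k ^ i)
        =o[atTop] fun n : ℕ => (n : ℝ) :=
  partial_sum_of_largest_weights_little_o_general w μ hC l hl
end

section
/- Assume Conditions (C). Then for any sequence l = l_n with l = o(n), the weight at position l of the size-biased random order without replacement satisfies E[w_{v(l)}] = 1 + o(1) as n → ∞. -/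
open MeasureTheory Filter Asymptotics
open scoped Classical ENNReal Topology

/-! Conditioning on the first draw, `E[w_{v(k+1)}]` is a convex combination of the ratios
`∑_{i ∈ T} w_i² / ∑_{i ∈ T} w_i` over the sets `T` of vertices left after `k` draws. Removing
`k ≤ l = o(n)` vertices costs at most `(k² ∑ w³)^{1/3} = o(n)` of `∑ w` (Hölder) and at most
`√((k² ∑ w³)^{1/3} ∑ w³) = o(n)` of `∑ w²` (Cauchy–Schwarz), since `∑ w³ = O(n)`. Hence every such
ratio is `(E[W²] + o(1)) / (E[W] + o(1)) = 1 + o(1)`. -/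

namespace SizeBiased

variable {α : Type*} (w : α → ℝ)

/-- The probability of drawing the elements of `L` in this order, size-biased without
replacement, from a pool of total weight `t`. -/
noncomputable def listProb : ℝ → List α → ℝ
  | _, [] => 1
  | t, a :: r => w a / t * listProb (t - w a) r

@[simp] lemma listProb_nil (t : ℝ) : listProb w t [] = 1 := rfl

@[simp] lemma listProb_cons (t : ℝ) (a : α) (r : List α) :
    listProb w t (a :: r) = w a / t * listProb w (t - w a) r := rfl

lemma listProb_ofFn {m : ℕ} (f : Fin m → α) (t : ℝ) :
    listProb w t (List.ofFn f) =
      ∏ i, w (f i) / (t - ∑ k ∈ Finset.univ.filter fun k => k < i, w (f k)) := by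
  induction m generalizing t with
  | zero => simp
  | succ m ih =>
    have hsum : ∀ i : Fin m, ∑ k ∈ Finset.univ.filter (fun k => k < i.succ), w (f k) =
        w (f 0) + ∑ k ∈ Finset.univ.filter (fun k => k < i), w (f k.succ) := by
      intro i
      simp only [Finset.sum_filter, Fin.sum_univ_succ, Fin.succ_pos, if_true,
        Fin.succ_lt_succ_iff]
    simp only [List.ofFn_succ, listProb_cons, ih, Fin.prod_univ_succ, hsum, sub_sub]
    simp

variable [DecidableEq α]

noncomputable def arrangements (S : Finset α) : Finset (List α) := S.toList.permutations.toFinset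

lemma mem_arrangements {S : Finset α} {L : List α} :
    L ∈ arrangements S ↔ L.Nodup ∧ L.toFinset = S := by
  rw [arrangements, List.mem_toFinset, List.mem_permutations]
  constructor
  · intro h
    exact ⟨h.nodup_iff.mpr S.nodup_toList,
      by rw [List.toFinset_eq_of_perm _ _ h, Finset.toList_toFinset]⟩
  · rintro ⟨hL, rfl⟩
    exact List.perm_of_nodup_nodup_toFinset_eq hL (Finset.nodup_toList _) (by simp)

lemma nil_mem_arrangements {S : Finset α} : [] ∈ arrangements S ↔ S = ∅ := by
  simp [mem_arrangements, eq_comm]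

lemma cons_mem_arrangements {S : Finset α} {a : α} {r : List α} :
    a :: r ∈ arrangements S ↔ a ∈ S ∧ r ∈ arrangements (S.erase a) := by
  simp only [mem_arrangements, List.nodup_cons, List.toFinset_cons]
  constructor
  · rintro ⟨⟨har, hr⟩, rfl⟩
    exact ⟨Finset.mem_insert_self _ _, hr, by rw [Finset.erase_insert (by simpa using har)]⟩
  · rintro ⟨ha, hr, hrS⟩
    exact ⟨⟨fun h => by simpa [hrS] using List.mem_toFinset.mpr h, hr⟩,
      by rw [hrS, Finset.insert_erase ha]⟩

lemma arrangements_empty : arrangements (∅ : Finset α) = {[]} := by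
  ext L
  cases L <;> simp [nil_mem_arrangements, cons_mem_arrangements]

lemma sum_arrangements_of_nonempty {β : Type*} [AddCommMonoid β] (f : List α → β)
    {S : Finset α} (hS : S.Nonempty) :
    ∑ L ∈ arrangements S, f L = ∑ a ∈ S, ∑ r ∈ arrangements (S.erase a), f (a :: r) := by
  rw [Finset.sum_sigma']
  symm
  refine Finset.sum_bij (fun p _ => p.1 :: p.2) ?_ ?_ ?_ (fun _ _ => rfl)
  · rintro ⟨a, r⟩ hp
    exact cons_mem_arrangements.mpr (Finset.mem_sigma.mp hp)
  · rintro ⟨a, r⟩ _ ⟨b, s⟩ _ h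
    obtain ⟨rfl, rfl⟩ := List.cons_eq_cons.mp h
    rfl
  · rintro (_ | ⟨a, r⟩) hL
    · exact absurd (nil_mem_arrangements.mp hL) hS.ne_empty
    · exact ⟨⟨a, r⟩, Finset.mem_sigma.mpr (cons_mem_arrangements.mp hL), rfl⟩

lemma sum_arrangements_listProb_mul (f : List α → ℝ) {S : Finset α} (hS : S.Nonempty) :
    ∑ L ∈ arrangements S, listProb w (∑ a ∈ S, w a) L * f L =
      ∑ a ∈ S, w a / (∑ b ∈ S, w b) *
        ∑ r ∈ arrangements (S.erase a), listProb w (∑ b ∈ S.erase a, w b) r * f (a :: r) := by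
  rw [sum_arrangements_of_nonempty _ hS]
  refine Finset.sum_congr rfl fun a ha => ?_
  simp only [listProb_cons, Finset.mul_sum, ← Finset.sum_erase_eq_sub ha, mul_assoc]

variable {w}

lemma sum_arrangements_listProb {S : Finset α} (hw : ∀ a ∈ S, 0 < w a) :
    ∑ L ∈ arrangements S, listProb w (∑ a ∈ S, w a) L = 1 := by
  induction S using Finset.strongInduction with
  | _ S ih =>
    obtain rfl | hS := S.eq_empty_or_nonempty
    · simp [arrangements_empty]
    have hpos : 0 < ∑ a ∈ S, w a := Finset.sum_pos hw hS
    calc ∑ L ∈ arrangements S, listProb w (∑ a ∈ S, w a) L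
        = ∑ L ∈ arrangements S, listProb w (∑ a ∈ S, w a) L * 1 := by simp
      _ = ∑ a ∈ S, w a / (∑ b ∈ S, w b) * 1 := by
        rw [sum_arrangements_listProb_mul w _ hS]
        refine Finset.sum_congr rfl fun a ha => ?_
        simp only [mul_one,
          ih _ (Finset.erase_ssubset ha) fun b hb => hw b (Finset.mem_of_mem_erase hb)]
      _ = 1 := by rw [← Finset.sum_mul, ← Finset.sum_div, div_self hpos.ne', mul_one]

variable (w)

/-- The expected weight of draw number `k + 1` in a size-biased order of `S` without
replacement. -/
noncomputable def mean (S : Finset α) (k : ℕ) : ℝ :=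
  ∑ L ∈ arrangements S, listProb w (∑ a ∈ S, w a) L * (L.map w).getD k 0

lemma mean_succ {S : Finset α} (hS : S.Nonempty) (k : ℕ) :
    mean w S (k + 1) = ∑ a ∈ S, w a / (∑ b ∈ S, w b) * mean w (S.erase a) k := by
  simp only [mean, sum_arrangements_listProb_mul w _ hS, List.map_cons, List.getD_cons_succ]

variable {w}

lemma mean_zero {S : Finset α} (hw : ∀ a ∈ S, 0 < w a) (hS : S.Nonempty) :
    mean w S 0 = (∑ a ∈ S, w a ^ 2) / ∑ a ∈ S, w a := by
  rw [mean, sum_arrangements_listProb_mul w _ hS, Finset.sum_div]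
  refine Finset.sum_congr rfl fun a ha => ?_
  simp only [List.map_cons, List.getD_cons_zero, ← Finset.sum_mul,
    sum_arrangements_listProb fun b hb => hw b (Finset.mem_of_mem_erase hb)]
  ring

lemma mean_mem_Icc {S : Finset α} (hw : ∀ a ∈ S, 0 < w a) {k : ℕ} (hk : k < S.card)
    {lo hi : ℝ} (hratio : ∀ T ⊆ S, (S \ T).card ≤ k →
      (∑ a ∈ T, w a ^ 2) / (∑ a ∈ T, w a) ∈ Set.Icc lo hi) :
    mean w S k ∈ Set.Icc lo hi := by
  have hS : S.Nonempty := Finset.card_pos.mp (by omega)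
  induction k generalizing S with
  | zero => simpa [mean_zero hw hS] using hratio S subset_rfl (by simp)
  | succ k ih =>
    have hpos : 0 < ∑ a ∈ S, w a := Finset.sum_pos hw hS
    rw [mean_succ w hS]
    refine (convex_Icc lo hi).sum_mem (fun a ha => div_nonneg (hw a ha).le hpos.le)
      (by rw [← Finset.sum_div, div_self hpos.ne']) fun a ha => ?_
    have hcard : (S.erase a).card = S.card - 1 := Finset.card_erase_of_mem ha
    refine ih (fun b hb => hw b (Finset.mem_of_mem_erase hb)) (by omega)
      (fun T hT hTk => hratio T (hT.trans (Finset.erase_subset a S)) ?_)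
      (Finset.card_pos.mp (by omega))
    have := Finset.pred_card_le_card_erase (s := S \ T) (a := a)
    rw [← Finset.erase_sdiff_comm] at this
    omega

lemma listProb_nonneg {S : Finset α} (hw : ∀ a ∈ S, 0 ≤ w a) {L : List α}
    (hL : L ∈ arrangements S) :
    0 ≤ listProb w (∑ a ∈ S, w a) L := by
  induction L generalizing S with
  | nil => simp
  | cons a r ih =>
    obtain ⟨ha, hr⟩ := cons_mem_arrangements.mp hL
    rw [listProb_cons, ← Finset.sum_erase_eq_sub ha]
    exact mul_nonneg (div_nonneg (hw a ha) (Finset.sum_nonneg hw))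
      (ih (fun b hb => hw b (Finset.mem_of_mem_erase hb)) hr)

lemma ofFn_mem_arrangements_univ {n : ℕ} (σ : Equiv.Perm (Fin n)) :
    List.ofFn σ ∈ arrangements Finset.univ :=
  mem_arrangements.mpr
    ⟨List.nodup_ofFn.mpr σ.injective, by ext; simp [List.mem_ofFn, σ.surjective _]⟩

lemma sum_perm_ofFn {n : ℕ} (g : List (Fin n) → ℝ) :
    ∑ σ : Equiv.Perm (Fin n), g (List.ofFn σ) = ∑ L ∈ arrangements Finset.univ, g L := by
  refine Finset.sum_bij (fun σ _ => List.ofFn σ) (fun σ _ => ofFn_mem_arrangements_univ σ)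
    (fun σ _ τ _ h => Equiv.coe_fn_injective (List.ofFn_injective h)) (fun L hL => ?_)
    (fun _ _ => rfl)
  obtain ⟨hnd, hfs⟩ := mem_arrangements.mp hL
  have hlen : L.length = n := by simpa [hfs] using (List.toFinset_card_of_nodup hnd).symm
  have hinj : Function.Injective fun i : Fin n => L[i.cast hlen.symm] :=
    fun i j h => Fin.ext (by simpa using (List.Nodup.getElem_inj_iff hnd).mp h)
  exact ⟨Equiv.ofBijective _ (Finite.injective_iff_bijective.mp hinj), Finset.mem_univ _,
    List.ext_getElem (by simp [hlen]) fun i _ _ => by simp⟩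

end SizeBiased

lemma integral_sum_smul_dirac {ι β : Type*} [Fintype ι] [MeasurableSpace β] [Finite β]
    [MeasurableSingletonClass β] {c : ι → ℝ} (hc : ∀ i, 0 ≤ c i) (x : ι → β) (f : β → ℝ) :
    ∫ b, f b ∂(Measure.sum fun i => ENNReal.ofReal (c i) • Measure.dirac (x i)) =
      ∑ i, c i * f (x i) := by
  rw [Measure.sum_fintype, integral_finsetSum_measure fun i _ =>
    Integrable.of_finite.smul_measure ENNReal.ofReal_ne_top]
  simp [integral_smul_measure, hc]

lemma sbW_succ {n : ℕ} (wn : Fin n → ℝ) (v : Fin n → Fin n) (k : ℕ) :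
    sbW wn v (k + 1) = ((List.ofFn v).map wn).getD k 0 := by
  simp only [sbW, Nat.add_sub_cancel, List.getD_eq_getElem?_getD, List.getElem?_map,
    List.getElem?_ofFn]
  split <;> simp

open SizeBiased in
lemma integral_sbW_sbMeasure {n : ℕ} {wn : Fin n → ℝ} (hw : ∀ i, 0 < wn i) (k : ℕ) :
    ∫ v, sbW wn v (k + 1) ∂sbMeasure n wn = mean wn Finset.univ k := by
  simp only [sbMeasure, ← listProb_ofFn]
  rw [integral_sum_smul_dirac (fun σ => listProb_nonneg (fun i _ => (hw i).le)
    (ofFn_mem_arrangements_univ σ))]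
  simp only [sbW_succ]
  exact sum_perm_ofFn fun L => listProb wn (∑ i, wn i) L * (L.map wn).getD k 0

lemma sum_le_rpow_card_sq_mul_sum_pow_three {ι : Type*} {w : ι → ℝ} {s : Finset ι}
    (hw : ∀ i ∈ s, 0 ≤ w i) :
    ∑ i ∈ s, w i ≤ ((s.card : ℝ) ^ 2 * ∑ i ∈ s, w i ^ 3) ^ (3⁻¹ : ℝ) := by
  rw [Real.le_rpow_inv_iff_of_pos (Finset.sum_nonneg hw)
    (mul_nonneg (sq_nonneg _) (Finset.sum_nonneg fun i hi => pow_nonneg (hw i hi) 3))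
    (by norm_num)]
  exact_mod_cast pow_sum_le_card_mul_sum_pow hw 2

lemma sum_sq_le_sqrt_sum_mul_sum_pow_three {ι : Type*} {w : ι → ℝ} {s : Finset ι}
    (hw : ∀ i ∈ s, 0 ≤ w i) :
    ∑ i ∈ s, w i ^ 2 ≤ √((∑ i ∈ s, w i) * ∑ i ∈ s, w i ^ 3) :=
  Real.le_sqrt_of_sq_le <| Finset.sum_sq_le_sum_mul_sum_of_sq_le_mul s hw
    (fun i hi => pow_nonneg (hw i hi) 3) fun i _ => le_of_eq (by ring)

lemma ratio_mem_Icc_of_sdiff_le {ι : Type*} [DecidableEq ι] {w : ι → ℝ} {s t : Finset ι}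
    (hts : t ⊆ s) (hw : ∀ i ∈ s, 0 ≤ w i) {a b : ℝ} (ha : ∑ i ∈ s \ t, w i ≤ a)
    (hb : ∑ i ∈ s \ t, w i ^ 2 ≤ b) (has : a < ∑ i ∈ s, w i) :
    (∑ i ∈ t, w i ^ 2) / (∑ i ∈ t, w i) ∈
      Set.Icc ((∑ i ∈ s, w i ^ 2 - b) / ∑ i ∈ s, w i)
        ((∑ i ∈ s, w i ^ 2) / (∑ i ∈ s, w i - a)) := by
  have h₁ := Finset.sum_sdiff (f := w) hts
  have h₂ := Finset.sum_sdiff (f := fun i => w i ^ 2) hts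
  have hsdiff₁ : 0 ≤ ∑ i ∈ s \ t, w i :=
    Finset.sum_nonneg fun i hi => hw i (Finset.sdiff_subset hi)
  have hsdiff₂ : 0 ≤ ∑ i ∈ s \ t, w i ^ 2 := Finset.sum_nonneg fun i _ => sq_nonneg _
  have ht₂ : 0 ≤ ∑ i ∈ t, w i ^ 2 := Finset.sum_nonneg fun i _ => sq_nonneg _
  have ht₁ : 0 < ∑ i ∈ t, w i := by linarith
  constructor
  · calc (∑ i ∈ s, w i ^ 2 - b) / ∑ i ∈ s, w i
        ≤ (∑ i ∈ t, w i ^ 2) / ∑ i ∈ s, w i :=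
          div_le_div_of_nonneg_right (by linarith) (by linarith)
      _ ≤ (∑ i ∈ t, w i ^ 2) / ∑ i ∈ t, w i := div_le_div_of_nonneg_left ht₂ ht₁ (by linarith)
  · calc (∑ i ∈ t, w i ^ 2) / ∑ i ∈ t, w i
        ≤ (∑ i ∈ s, w i ^ 2) / ∑ i ∈ t, w i := div_le_div_of_nonneg_right (by linarith) ht₁.le
      _ ≤ (∑ i ∈ s, w i ^ 2) / (∑ i ∈ s, w i - a) :=
          div_le_div_of_nonneg_left (by linarith) (by linarith) (by linarith)

lemma ratio_mem_Icc_of_card_sdiff_le {ι : Type*} [DecidableEq ι] {w : ι → ℝ} {s t : Finset ι}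
    (hts : t ⊆ s) (hw : ∀ i ∈ s, 0 ≤ w i) {k : ℕ} (hk : (s \ t).card ≤ k) {A : ℝ}
    (hA : ((k : ℝ) ^ 2 * ∑ i ∈ s, w i ^ 3) ^ (3⁻¹ : ℝ) ≤ A) (hAs : A < ∑ i ∈ s, w i) :
    (∑ i ∈ t, w i ^ 2) / (∑ i ∈ t, w i) ∈
      Set.Icc ((∑ i ∈ s, w i ^ 2 - √(A * ∑ i ∈ s, w i ^ 3)) / ∑ i ∈ s, w i)
        ((∑ i ∈ s, w i ^ 2) / (∑ i ∈ s, w i - A)) := by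
  have hw' : ∀ i ∈ s \ t, 0 ≤ w i := fun i hi => hw i (Finset.sdiff_subset hi)
  have hcube : ∑ i ∈ s \ t, w i ^ 3 ≤ ∑ i ∈ s, w i ^ 3 :=
    Finset.sum_le_sum_of_subset_of_nonneg Finset.sdiff_subset
      fun i hi _ => pow_nonneg (hw i hi) 3
  have hcube₀ : 0 ≤ ∑ i ∈ s \ t, w i ^ 3 :=
    Finset.sum_nonneg fun i hi => pow_nonneg (hw' i hi) 3
  have hcard : ((s \ t).card : ℝ) ^ 2 ≤ (k : ℝ) ^ 2 := by gcongr
  have hmass : ∑ i ∈ s \ t, w i ≤ A :=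
    (sum_le_rpow_card_sq_mul_sum_pow_three hw').trans <|
      (Real.rpow_le_rpow (by positivity) (mul_le_mul hcard hcube hcube₀ (by positivity))
        (by norm_num)).trans hA
  have hmass₂ : ∑ i ∈ s \ t, w i ^ 2 ≤ √(A * ∑ i ∈ s, w i ^ 3) :=
    (sum_sq_le_sqrt_sum_mul_sum_pow_three hw').trans <| Real.sqrt_le_sqrt <|
      mul_le_mul hmass hcube hcube₀ ((Finset.sum_nonneg hw').trans hmass)
  exact ratio_mem_Icc_of_sdiff_le hts hw hmass hmass₂ hAs

lemma isBigO_natCast_rpow_natCast {r : ℝ} (hr : r ≤ 1) :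
    (fun n : ℕ => (n : ℝ) ^ r) =O[atTop] fun n : ℕ => (n : ℝ) := by
  refine Eventually.isBigO ?_
  filter_upwards [eventually_ge_atTop 1] with n hn
  have hn : (1 : ℝ) ≤ n := by exact_mod_cast hn
  rw [Real.norm_of_nonneg (by positivity)]
  simpa using Real.rpow_le_rpow_of_exponent_le hn hr

lemma tendsto_div_natCast_of_isLittleO_rpow {f : ℕ → ℝ} {c r : ℝ} (hr : r ≤ 1)
    (h : (fun n => f n - c * n) =o[atTop] fun n : ℕ => (n : ℝ) ^ r) :
    Tendsto (fun n => f n / n) atTop (𝓝 c) := by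
  have := ((h.trans_isBigO (isBigO_natCast_rpow_natCast hr)).tendsto_div_nhds_zero).add_const c
  rw [zero_add] at this
  refine this.congr' ?_
  filter_upwards [eventually_ne_atTop 0] with n hn
  field_simp
  ring

lemma Filter.Tendsto.div_of_div_natCast {x y : ℕ → ℝ} {a b : ℝ}
    (hx : Tendsto (fun n => x n / n) atTop (𝓝 a)) (hy : Tendsto (fun n => y n / n) atTop (𝓝 b))
    (hb : b ≠ 0) : Tendsto (fun n => x n / y n) atTop (𝓝 (a / b)) := by
  refine (hx.div hy hb).congr' ?_
  filter_upwards [eventually_ne_atTop 0] with n hn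
  exact div_div_div_cancel_right₀ (Nat.cast_ne_zero.mpr hn) _ _

lemma tendsto_rpow_inv_three_div_natCast {a b : ℕ → ℝ} {c : ℝ} (hb₀ : ∀ n, 0 ≤ b n)
    (ha : Tendsto (fun n => a n / n) atTop (𝓝 0)) (hb : Tendsto (fun n => b n / n) atTop (𝓝 c)) :
    Tendsto (fun n => (a n ^ 2 * b n) ^ (3⁻¹ : ℝ) / n) atTop (𝓝 0) := by
  have h₀ : Tendsto (fun n => (a n / n) ^ 2 * (b n / n)) atTop (𝓝 0) := by
    simpa using (ha.pow 2).mul hb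
  have := (Real.continuousAt_rpow_const 0 3⁻¹ (Or.inr (by norm_num))).tendsto.comp h₀
  rw [Function.comp_def, Real.zero_rpow (by norm_num)] at this
  refine this.congr fun n => ?_
  rw [div_pow, div_mul_div_comm, ← pow_succ,
    Real.div_rpow (mul_nonneg (sq_nonneg _) (hb₀ n)) (by positivity)]
  congr 1
  exact_mod_cast Real.pow_rpow_inv_natCast n.cast_nonneg (n := 3) (by norm_num)

lemma tendsto_sqrt_mul_div_natCast {a b : ℕ → ℝ} {c : ℝ}
    (ha : Tendsto (fun n => a n / n) atTop (𝓝 0)) (hb : Tendsto (fun n => b n / n) atTop (𝓝 c)) :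
    Tendsto (fun n => √(a n * b n) / n) atTop (𝓝 0) := by
  have := (Real.continuous_sqrt.tendsto 0).comp (by simpa using ha.mul hb)
  rw [Function.comp_def, Real.sqrt_zero] at this
  refine this.congr fun n => ?_
  rw [div_mul_div_comm, Real.sqrt_div' _ (by positivity), Real.sqrt_mul_self n.cast_nonneg]

theorem SizeBiased.tendsto_mean_univ {w : ∀ n : ℕ, Fin n → ℝ} (hw : ∀ n i, 0 < w n i)
    {c₁ c₂ c₃ : ℝ} (hc₁ : 0 < c₁) (h₁ : Tendsto (fun n => (∑ i, w n i) / n) atTop (𝓝 c₁))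
    (h₂ : Tendsto (fun n => (∑ i, w n i ^ 2) / n) atTop (𝓝 c₂))
    (h₃ : Tendsto (fun n => (∑ i, w n i ^ 3) / n) atTop (𝓝 c₃))
    {k : ℕ → ℕ} (hk : Tendsto (fun n => (k n : ℝ) / n) atTop (𝓝 0)) :
    Tendsto (fun n => mean (w n) Finset.univ (k n)) atTop (𝓝 (c₂ / c₁)) := by
  set T₁ : ℕ → ℝ := fun n => ∑ i, w n i
  set T₂ : ℕ → ℝ := fun n => ∑ i, w n i ^ 2
  set T₃ : ℕ → ℝ := fun n => ∑ i, w n i ^ 3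
  -- `A n` and `B n` bound the weight and the squared weight of any `k n` of the vertices.
  set A : ℕ → ℝ := fun n => ((k n : ℝ) ^ 2 * T₃ n) ^ (3⁻¹ : ℝ)
  set B : ℕ → ℝ := fun n => √(A n * T₃ n)
  have hA : Tendsto (fun n => A n / n) atTop (𝓝 0) :=
    tendsto_rpow_inv_three_div_natCast
      (fun n => Finset.sum_nonneg fun i _ => pow_nonneg (hw n i).le 3) hk h₃
  have hB : Tendsto (fun n => B n / n) atTop (𝓝 0) := tendsto_sqrt_mul_div_natCast hA h₃
  have hlo : Tendsto (fun n => (T₂ n - B n) / T₁ n) atTop (𝓝 (c₂ / c₁)) := by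
    refine Tendsto.div_of_div_natCast ?_ h₁ hc₁.ne'
    simpa [sub_div] using h₂.sub hB
  have hhi : Tendsto (fun n => T₂ n / (T₁ n - A n)) atTop (𝓝 (c₂ / c₁)) := by
    refine Tendsto.div_of_div_natCast h₂ ?_ hc₁.ne'
    simpa [sub_div] using h₁.sub hA
  have hbounds : ∀ᶠ n in atTop,
      mean (w n) Finset.univ (k n) ∈ Set.Icc ((T₂ n - B n) / T₁ n) (T₂ n / (T₁ n - A n)) := by
    filter_upwards [hk.eventually (gt_mem_nhds one_pos),
      (h₁.sub hA).eventually (lt_mem_nhds (by simpa using hc₁)), eventually_gt_atTop 0]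
      with n hkn hAT hn
    have hn : (0 : ℝ) < n := Nat.cast_pos.mpr hn
    rw [div_lt_one hn] at hkn
    rw [← sub_div, div_pos_iff_of_pos_right hn, sub_pos] at hAT
    exact mean_mem_Icc (fun i _ => hw n i) (by simpa using hkn) fun T _ hT =>
      ratio_mem_Icc_of_card_sdiff_le (Finset.subset_univ T) (fun i _ => (hw n i).le) hT le_rfl
        hAT
  exact tendsto_of_tendsto_of_tendsto_of_le_of_le' hlo hhi (hbounds.mono fun _ h => h.1)
    (hbounds.mono fun _ h => h.2)

lemma integrable_id_of_integrable_pow_three {μ : Measure ℝ} [IsFiniteMeasure μ]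
    (h : Integrable (fun x => x ^ 3) μ) : Integrable (fun x : ℝ => x) μ := by
  refine ((integrable_const 1).add h.abs).mono' measurable_id.aestronglyMeasurable
    (ae_of_all _ fun x => ?_)
  rw [Real.norm_eq_abs, Pi.add_apply, abs_pow]
  rcases le_total |x| 1 with hx | hx
  · linarith [pow_nonneg (abs_nonneg x) 3]
  · linarith [pow_le_pow_right₀ hx (show 1 ≤ 3 by norm_num), pow_one |x|]

lemma CondC.integral_id_pos {w : ∀ n : ℕ, Fin n → ℝ} {μ : Measure ℝ} (hC : CondC w μ) :
    0 < ∫ x, x ∂μ := by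
  have := hC.isProb
  rw [integral_pos_iff_support_of_nonneg_ae (hC.pos.mono fun _ hx => hx.le)
    (integrable_id_of_integrable_pow_three hC.int3), pos_iff_ne_zero]
  intro h
  have hzero : ∀ᵐ x ∂μ, x = 0 := by simpa using measure_eq_zero_iff_ae_notMem.mp h
  obtain ⟨x, hx, hx0⟩ := (hC.pos.and hzero).exists
  exact hx.ne' hx0

/-- Lemma of the paper: `E[w_{v(l)}] = 1 + o(1)` for `l = o(n)`. -/
theorem mean_size_biased_weight
    (w : ∀ n : ℕ, Fin n → ℝ) (μ : Measure ℝ) (hC : CondC w μ)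
    (l : ℕ → ℕ) (hl0 : ∀ n, 1 ≤ l n)
    (hl : (fun n => (l n : ℝ)) =o[atTop] fun n : ℕ => (n : ℝ)) :
    (fun n => (∫ ω, sbW (w n) ω (l n) ∂sbMeasure n (w n)) - 1) =o[atTop]
      fun _ : ℕ => (1 : ℝ) := by
  have hE := hC.integral_id_pos
  have h₁ := tendsto_div_natCast_of_isLittleO_rpow (by norm_num) hC.ell_asymp
  have h₂ := tendsto_div_natCast_of_isLittleO_rpow (by norm_num) (hC.moment_eq ▸ hC.sq_asymp)
  have h₃ := tendsto_div_natCast_of_isLittleO_rpow (r := 0) (by norm_num)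
    (hC.cube_asymp.congr_right fun _ => (Real.rpow_zero _).symm)
  have hk : Tendsto (fun n => ((l n - 1 : ℕ) : ℝ) / n) atTop (𝓝 0) :=
    tendsto_of_tendsto_of_tendsto_of_le_of_le tendsto_const_nhds hl.tendsto_div_nhds_zero
      (fun n => by positivity)
      (fun n => div_le_div_of_nonneg_right (Nat.cast_le.mpr ((l n).sub_le 1)) n.cast_nonneg)
  have hmean := SizeBiased.tendsto_mean_univ hC.w_pos hE h₁ h₂ h₃ hk
  rw [div_self hE.ne'] at hmean
  rw [isLittleO_one_iff, ← sub_self 1]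
  refine (hmean.sub_const 1).congr fun n => ?_
  rw [← integral_sbW_sbMeasure (hC.w_pos n), Nat.sub_add_cancel (hl0 n)]
end

section
/- Assume Conditions (C). Fix f = f_n = o(n^{1/3}), an index 1 ≤ i, and let w^{(i)}_k = min(w_k, ℓ_n^{1/3}/(i·√f)) be the truncated weights. Then for any positions 1 ≤ u ≤ w ≤ n in the size-biased random order without replacement and any x ≥ 0, the truncated weights are stochastically decreasing along the order: P( w^{(i)}_{v(w)} ≥ x ) ≤ P( w^{(i)}_{v(u)} ≥ x ). -/
open MeasureTheory Filter Asymptotics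
open scoped Classical ENNReal Topology

/-! The probability of `v = σ` drops when two adjacent entries of `σ` are put in increasing
order of weight: the numerators of the product defining it are unchanged, while the one
affected denominator, `ℓ_n` minus the weight seen before that position, grows. Pairing each
order with its transposition at positions `a, a + 1` therefore shows that `w_{v(a+1)}` is
stochastically dominated by `w_{v(a)}`, and chaining such steps gives the theorem. -/

namespace Finset

variable {ι M : Type*} [DecidableEq ι]

lemma sum_swap_apply_of_mem_iff [AddCommMonoid M] {s : Finset ι} {a b : ι} (f : ι → M)
    (h : a ∈ s ↔ b ∈ s) : ∑ k ∈ s, f (Equiv.swap a b k) = ∑ k ∈ s, f k := by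
  refine sum_equiv (Equiv.swap a b) (fun k => ?_) fun _ _ => rfl
  rcases eq_or_ne k a with rfl | hka
  · simpa using h
  rcases eq_or_ne k b with rfl | hkb
  · simpa using h.symm
  · rw [Equiv.swap_apply_of_ne_of_ne hka hkb]

lemma sum_swap_apply_of_mem_of_notMem [AddCommGroup M] {s : Finset ι} {a b : ι} (f : ι → M)
    (ha : a ∈ s) (hb : b ∉ s) : ∑ k ∈ s, f (Equiv.swap a b k) = ∑ k ∈ s, f k - f a + f b := by
  have hfix : ∀ k ∈ s.erase a, f (Equiv.swap a b k) = f k := fun k hk =>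
    congrArg f <| Equiv.swap_apply_of_ne_of_ne (ne_of_mem_erase hk)
      (ne_of_mem_of_not_mem (mem_of_mem_erase hk) hb)
  rw [← add_sum_erase s _ ha, ← add_sum_erase s f ha, sum_congr rfl hfix,
    Equiv.swap_apply_left]
  abel

end Finset

section SizeBiased

open Finset

variable {n : ℕ} (wn : Fin n → ℝ)

noncomputable def sbProb (σ : Equiv.Perm (Fin n)) : ℝ :=
  ∏ i : Fin n, wn (σ i) / ((∑ k, wn k) - ∑ k ∈ univ.filter fun k => k < i, wn (σ k))

lemma sbMeasure_apply (S : Set (Fin n → Fin n)) :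
    sbMeasure n wn S = ∑ σ : Equiv.Perm (Fin n), if ⇑σ ∈ S then ENNReal.ofReal (sbProb wn σ)
      else 0 := by
  have hS : MeasurableSet S := S.toFinite.measurableSet
  rw [sbMeasure, Measure.sum_apply _ hS, tsum_fintype]
  refine sum_congr rfl fun σ _ => ?_
  rw [Measure.smul_apply, Measure.dirac_apply' _ hS, smul_eq_mul, Set.indicator_apply]
  split_ifs <;> simp [sbProb]

lemma sum_sub_sum_filter_lt_pos (hw : ∀ k, 0 < wn k) (σ : Equiv.Perm (Fin n)) (i : Fin n) :
    0 < (∑ k, wn k) - ∑ k ∈ univ.filter (fun k => k < i), wn (σ k) := by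
  have hsplit := sum_filter_add_sum_filter_not univ (fun k => k < i) fun k => wn (σ k)
  rw [Equiv.sum_comp σ wn] at hsplit
  have hi : wn (σ i) ≤ ∑ k ∈ univ.filter (fun k => ¬k < i), wn (σ k) :=
    single_le_sum (fun k _ => (hw (σ k)).le) (by simp)
  linarith [hw (σ i)]

lemma sum_filter_lt_mul_swap_le (σ : Equiv.Perm (Fin n)) {a b : Fin n} (hab : (a : ℕ) + 1 = b)
    (hle : wn (σ b) ≤ wn (σ a)) (i : Fin n) :
    ∑ k ∈ univ.filter (fun k => k < i), wn ((σ * Equiv.swap a b) k) ≤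
      ∑ k ∈ univ.filter (fun k => k < i), wn (σ k) := by
  simp only [Equiv.Perm.mul_apply]
  by_cases hib : i = b
  · subst hib
    rw [sum_swap_apply_of_mem_of_notMem (fun k => wn (σ k))
      (by simp only [mem_filter, mem_univ, true_and, Fin.lt_def]; omega) (by simp)]
    linarith
  · refine (sum_swap_apply_of_mem_iff (fun k => wn (σ k)) ?_).le
    simp only [mem_filter, mem_univ, true_and, Fin.lt_def]
    have : (i : ℕ) ≠ b := fun h => hib (Fin.ext h)
    omega

lemma sbProb_mul_swap_le (hw : ∀ k, 0 < wn k) (σ : Equiv.Perm (Fin n)) {a b : Fin n}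
    (hab : (a : ℕ) + 1 = b) (hle : wn (σ b) ≤ wn (σ a)) :
    sbProb wn (σ * Equiv.swap a b) ≤ sbProb wn σ := by
  simp only [sbProb, prod_div_distrib]
  rw [Equiv.prod_comp (σ * Equiv.swap a b) wn, ← Equiv.prod_comp σ wn]
  refine div_le_div_of_nonneg_left (prod_nonneg fun k _ => (hw (σ k)).le)
    (prod_pos fun i _ => sum_sub_sum_filter_lt_pos wn hw σ i)
    (prod_le_prod (fun i _ => (sum_sub_sum_filter_lt_pos wn hw σ i).le) fun i _ => ?_)
  exact sub_le_sub_left (sum_filter_lt_mul_swap_le wn σ hab hle i) _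

lemma sbMeasure_preimage_comp_swap_le (hw : ∀ k, 0 < wn k) {a b : Fin n}
    (hab : (a : ℕ) + 1 = b) (S : Set (Fin n → Fin n))
    (hS : ∀ σ : Equiv.Perm (Fin n), ⇑σ ∈ S → wn (σ b) ≤ wn (σ a)) :
    sbMeasure n wn ((· ∘ Equiv.swap a b) ⁻¹' S) ≤ sbMeasure n wn S := by
  have hinv : ∀ σ : Equiv.Perm (Fin n), ⇑(σ * Equiv.swap a b) ∘ Equiv.swap a b = σ :=
    fun σ => by rw [← Equiv.Perm.coe_mul, Equiv.mul_swap_mul_self]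
  rw [sbMeasure_apply, sbMeasure_apply,
    ← Fintype.sum_equiv (Equiv.mulRight (Equiv.swap a b)) _ _ fun _ => rfl]
  refine sum_le_sum fun σ _ => ?_
  simp only [Equiv.coe_mulRight, Set.mem_preimage, hinv]
  split_ifs with hσ
  · exact ENNReal.ofReal_le_ofReal (sbProb_mul_swap_le wn hw σ hab (hS σ hσ))
  · exact le_rfl

lemma sbMeasure_weight_succ_le (hw : ∀ k, 0 < wn k) {p : ℝ → Prop} (hp : Monotone p)
    {a b : Fin n} (hab : (a : ℕ) + 1 = b) :
    sbMeasure n wn {ω | p (wn (ω b))} ≤ sbMeasure n wn {ω | p (wn (ω a))} := by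
  set A := {ω : Fin n → Fin n | p (wn (ω a))}
  set B := {ω : Fin n → Fin n | p (wn (ω b))}
  have hswap : B \ A = (· ∘ Equiv.swap a b) ⁻¹' (A \ B) := by
    ext ω
    simp [A, B]
  have hdiff : sbMeasure n wn (B \ A) ≤ sbMeasure n wn (A \ B) := by
    rw [hswap]
    refine sbMeasure_preimage_comp_swap_le wn hw hab _ fun σ ⟨hA, hB⟩ => ?_
    by_contra! hlt
    exact hB (hp hlt.le hA)
  calc sbMeasure n wn B = sbMeasure n wn (A ∩ B) + sbMeasure n wn (B \ A) := by
        rw [Set.inter_comm, measure_inter_add_sdiff _ A.toFinite.measurableSet]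
    _ ≤ sbMeasure n wn (A ∩ B) + sbMeasure n wn (A \ B) := by gcongr
    _ = sbMeasure n wn A := measure_inter_add_sdiff _ B.toFinite.measurableSet

lemma sbW_of_pos_of_le {k : ℕ} (hk : 1 ≤ k) (hkn : k ≤ n) (ω : Fin n → Fin n) :
    sbW wn ω k = wn (ω ⟨k - 1, by omega⟩) := by
  rw [sbW, dif_pos (by omega), if_neg (by omega)]

lemma sbMeasure_sbW_le_of_le (hw : ∀ k, 0 < wn k) {p : ℝ → Prop} (hp : Monotone p)
    {u v : ℕ} (hu : 1 ≤ u) (huv : u ≤ v) (hvn : v ≤ n) :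
    sbMeasure n wn {ω | p (sbW wn ω v)} ≤ sbMeasure n wn {ω | p (sbW wn ω u)} := by
  induction v, huv using Nat.le_induction with
  | base => exact le_rfl
  | succ v huv ih =>
    refine le_trans ?_ (ih (by omega))
    simp only [sbW_of_pos_of_le wn (hu.trans huv) (by omega),
      sbW_of_pos_of_le wn (hu.trans (huv.trans v.le_succ)) hvn]
    exact sbMeasure_weight_succ_le wn hw hp (by simp; omega)

end SizeBiased

theorem truncated_weights_stochastically_decreasing_general
    (w : ∀ n : ℕ, Fin n → ℝ) (μ : Measure ℝ) (hC : CondC w μ)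
    (f : ℕ → ℝ)
    (i : ℕ) :
    ∀ n : ℕ, ∀ u v : ℕ, 1 ≤ u → u ≤ v → v ≤ n → ∀ x : ℝ, 0 ≤ x →
      sbMeasure n (w n)
          {ω : Fin n → Fin n |
            x ≤ min (sbW (w n) ω v) (ell w n ^ ((1 : ℝ) / 3) / ((i : ℝ) * Real.sqrt (f n)))}
        ≤ sbMeasure n (w n)
          {ω : Fin n → Fin n |
            x ≤ min (sbW (w n) ω u) (ell w n ^ ((1 : ℝ) / 3) / ((i : ℝ) * Real.sqrt (f n)))} := by
  intro n u v hu huv hvn x _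
  exact sbMeasure_sbW_le_of_le (w n) (hC.w_pos n)
    (p := fun t => x ≤ min t (ell w n ^ ((1 : ℝ) / 3) / ((i : ℝ) * Real.sqrt (f n))))
    (fun s t hst hs => hs.trans (min_le_min_right _ hst)) hu huv hvn

/-- Lemma of the paper: the truncated weights are stochastically
decreasing along the size-biased random order. -/
theorem truncated_weights_stochastically_decreasing
    (w : ∀ n : ℕ, Fin n → ℝ) (μ : Measure ℝ) (hC : CondC w μ)
    (f : ℕ → ℝ) (hf : f =o[atTop] fun n : ℕ => (n : ℝ) ^ ((1 : ℝ) / 3))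
    (i : ℕ) (hi : 1 ≤ i) :
    ∀ n : ℕ, ∀ u v : ℕ, 1 ≤ u → u ≤ v → v ≤ n → ∀ x : ℝ, 0 ≤ x →
      sbMeasure n (w n)
          {ω : Fin n → Fin n |
            x ≤ min (sbW (w n) ω v) (ell w n ^ ((1 : ℝ) / 3) / ((i : ℝ) * Real.sqrt (f n)))}
        ≤ sbMeasure n (w n)
          {ω : Fin n → Fin n |
            x ≤ min (sbW (w n) ω u) (ell w n ^ ((1 : ℝ) / 3) / ((i : ℝ) * Real.sqrt (f n)))} :=
  truncated_weights_stochastically_decreasing_general w μ hC f i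
end
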